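/- Let G and H be connected non-trivial graphs with H not complete. If tn(G ∘ H) = 3 · tn(G), then G is not a complete graph. -/

import Mathlib

open SimpleGraph

/-- A walk `W` between `u` and `v` is a *tolled walk* if either `u = v` and `W` is trivial,
or `u` and `v` are adjacent and `W` is the single-edge walk, or `u ≠ v` are non-adjacent,
`W` has at least one interior vertex, `u` is adjacent exactly to the interior vertex
at position 1 and `v` exactly to the interior vertex at position `W.length - 1`. -/
def IsTolledWalk {V : Type*} (G : SimpleGraph V) {u v : V} (W : G.Walk u v) : Prop :=
  (u = v ∧ W.length = 0) ∨
  (G.Adj u v ∧ W.support = [u, v]) ∨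
  (¬ G.Adj u v ∧ u ≠ v ∧ 2 ≤ W.length ∧
    (∀ i, 0 < i → i < W.length → (G.Adj u (W.support.getD i u) ↔ i = 1)) ∧
    (∀ i, 0 < i → i < W.length → (G.Adj v (W.support.getD i u) ↔ i = W.length - 1)))

/-- The toll interval between `u` and `v`: vertices lying on some tolled walk. -/
def tollInterval {V : Type*} (G : SimpleGraph V) (u v : V) : Set V :=
  {x | ∃ W : G.Walk u v, IsTolledWalk G W ∧ x ∈ W.support}

/-- A toll set: the toll intervals between its pairs cover the vertex set. -/
def IsTollSet {V : Type*} (G : SimpleGraph V) (S : Set V) : Prop :=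
  ∀ x : V, ∃ u ∈ S, ∃ v ∈ S, x ∈ tollInterval G u v

/-- The toll number: minimum size of a toll set. -/
noncomputable def tollNumber {V : Type*} (G : SimpleGraph V) : ℕ :=
  sInf {n | ∃ S : Set V, S.Finite ∧ S.ncard = n ∧ IsTollSet G S}

/-- `v` is a cut vertex if deleting it disconnects the graph. -/
def IsCutVertex {V : Type*} (G : SimpleGraph V) (v : V) : Prop :=
  ¬ (G.induce {w | w ≠ v}).Preconnected

/-- The extreme vertices of `G` with respect to toll convexity. -/
def extremeVertices {V : Type*} (G : SimpleGraph V) : Set V :=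
  {s | ∀ x y : V, x ≠ s → y ≠ s → s ∉ tollInterval G x y}

/-- The lexicographic product of simple graphs. -/
def lexProd {V W : Type*} (G : SimpleGraph V) (H : SimpleGraph W) : SimpleGraph (V × W) where
  Adj a b := G.Adj a.1 b.1 ∨ (a.1 = b.1 ∧ H.Adj a.2 b.2)
  symm := by
    constructor
    rintro a b (h | ⟨h1, h2⟩)
    · exact Or.inl h.symm
    · exact Or.inr ⟨h1.symm, h2.symm⟩
  loopless := by
    constructor
    rintro a (h | ⟨_, h⟩)
    · exact G.loopless.1 _ h
    · exact H.loopless.1 _ h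

/-!
In `Kₙ` two distinct vertices are adjacent, so every tolled walk is trivial or a single edge and
the only toll set is the whole vertex set: `tn(Kₙ) = n`, which is at least `2`, or `0` when the
vertex set is infinite (no finite toll set, and `sInf ∅ = 0`). In
`Kₙ ∘ H`, if `h₁ ≠ h₂` are non-adjacent in `H`, then any vertex outside the fibre over `g` is a
common neighbour of the non-adjacent vertices `(g, h₁)` and `(g, h₂)`, so the four vertices
`{g₁, g₂} × {h₁, h₂}` form a toll set and `0 < tn(Kₙ ∘ H) ≤ 4`. Neither `0` nor a number `≥ 6`
lies in that range.
-/

namespace SimpleGraph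

variable {V W : Type*}

@[simp]
lemma lexProd_adj (G : SimpleGraph V) (H : SimpleGraph W) {a b : V × W} :
    (lexProd G H).Adj a b ↔ G.Adj a.1 b.1 ∨ (a.1 = b.1 ∧ H.Adj a.2 b.2) :=
  Iff.rfl

section TollInterval

variable {G : SimpleGraph V} {u v x : V}

lemma tollInterval_self_subset (u : V) : tollInterval G u u ⊆ {u} := by
  rintro x ⟨W, ⟨-, hW⟩ | ⟨hadj, -⟩ | ⟨-, hne, -⟩, hx⟩
  · rwa [Walk.nil_iff_support_eq.mp (Walk.length_eq_zero_iff.mp hW), List.mem_singleton] at hx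
  · exact absurd hadj (G.loopless.1 u)
  · exact absurd rfl hne

lemma tollInterval_subset_of_adj (huv : G.Adj u v) : tollInterval G u v ⊆ {u, v} := by
  rintro x ⟨W, ⟨rfl, -⟩ | ⟨-, hW⟩ | ⟨hnadj, -⟩, hx⟩
  · exact absurd huv (G.loopless.1 u)
  · simpa [hW] using hx
  · exact absurd huv hnadj

lemma tollInterval_top_subset (u v : V) : tollInterval ⊤ u v ⊆ {u, v} := by
  obtain rfl | huv := eq_or_ne u v
  · exact (tollInterval_self_subset u).trans (by simp)
  · exact tollInterval_subset_of_adj ((top_adj u v).mpr huv)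

lemma mem_tollInterval_of_adj_of_adj (hne : u ≠ v) (hnadj : ¬G.Adj u v) (hux : G.Adj u x)
    (hxv : G.Adj x v) : x ∈ tollInterval G u v := by
  refine ⟨.cons hux (.cons hxv .nil), Or.inr (Or.inr ⟨hnadj, hne, by simp, ?_, ?_⟩), by simp⟩
  all_goals
    intro i hi0 hi2
    obtain rfl : i = 1 := by simp at hi2; omega
  · simpa using hux
  · simpa using hxv.symm

end TollInterval

lemma isTollSet_top_iff {S : Set V} : IsTollSet ⊤ S ↔ S = Set.univ := by
  refine ⟨fun hS => Set.eq_univ_of_forall fun x => ?_, fun hS x => ?_⟩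
  · obtain ⟨u, hu, v, hv, hx⟩ := hS x
    rcases tollInterval_top_subset u v hx with rfl | rfl <;> assumption
  · subst hS
    exact ⟨x, trivial, x, trivial, .nil, Or.inl ⟨rfl, rfl⟩, by simp⟩

lemma tollNumber_top : tollNumber (⊤ : SimpleGraph V) = Nat.card V := by
  simp only [tollNumber, isTollSet_top_iff, exists_eq_right_right, Set.ncard_univ]
  obtain hV | hV := finite_or_infinite V
  · simp [Set.finite_univ]
  · simp [Set.infinite_univ, Nat.card_eq_zero_of_infinite]

lemma tollNumber_le_ncard {G : SimpleGraph V} {S : Set V} (hSf : S.Finite) (hS : IsTollSet G S) :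
    tollNumber G ≤ S.ncard :=
  Nat.sInf_le ⟨S, hSf, rfl, hS⟩

lemma tollNumber_pos [Nonempty V] {G : SimpleGraph V} {S : Set V} (hSf : S.Finite)
    (hS : IsTollSet G S) : 0 < tollNumber G := by
  obtain ⟨T, hTf, hT, hTtoll⟩ :=
    Nat.sInf_mem (s := {n | ∃ T : Set V, T.Finite ∧ T.ncard = n ∧ IsTollSet G T})
      ⟨_, S, hSf, rfl, hS⟩
  rw [tollNumber, ← hT, Set.ncard_pos hTf]
  obtain ⟨u, hu, -⟩ := hTtoll (Classical.arbitrary V)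
  exact ⟨u, hu⟩

lemma mem_tollInterval_lexProd {G : SimpleGraph V} {H : SimpleGraph W} {g : V} {h₁ h₂ : W}
    (hne : h₁ ≠ h₂) (hnadj : ¬H.Adj h₁ h₂) {x : V × W} (hgx : G.Adj g x.1) :
    x ∈ tollInterval (lexProd G H) (g, h₁) (g, h₂) :=
  mem_tollInterval_of_adj_of_adj (by simpa using hne) (by simpa using hnadj)
    (Or.inl hgx) (Or.inl hgx.symm)

lemma isTollSet_lexProd_top {H : SimpleGraph W} {g₁ g₂ : V} (hg : g₁ ≠ g₂) {h₁ h₂ : W}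
    (hne : h₁ ≠ h₂) (hnadj : ¬H.Adj h₁ h₂) :
    IsTollSet (lexProd ⊤ H) ({g₁, g₂} ×ˢ {h₁, h₂}) := by
  intro x
  by_cases hx : x.1 = g₁
  · exact ⟨(g₂, h₁), by simp, (g₂, h₂), by simp,
      mem_tollInterval_lexProd hne hnadj ((top_adj _ _).mpr (hx ▸ hg.symm))⟩
  · exact ⟨(g₁, h₁), by simp, (g₁, h₂), by simp,
      mem_tollInterval_lexProd hne hnadj ((top_adj _ _).mpr (Ne.symm hx))⟩

end SimpleGraph

theorem stmt15_general {V W : Type*} [Nontrivial V]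
    (G : SimpleGraph V) (H : SimpleGraph W)
    (hH : H ≠ ⊤)
    (heq : tollNumber (lexProd G H) = 3 * tollNumber G) :
    G ≠ ⊤ := by
  rintro rfl
  obtain ⟨h₁, h₂, hne, hnadj⟩ := ne_top_iff_exists_not_adj.mp hH
  obtain ⟨g₁, g₂, hg⟩ := exists_pair_ne V
  have : Nonempty W := ⟨h₁⟩
  have hS := isTollSet_lexProd_top hg hne hnadj
  have hSf : ({g₁, g₂} ×ˢ {h₁, h₂} : Set (V × W)).Finite := Set.toFinite _
  have hle := tollNumber_le_ncard hSf hS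
  have hpos := tollNumber_pos hSf hS
  rw [Set.ncard_prod, Set.ncard_pair hg, Set.ncard_pair hne] at hle
  rw [tollNumber_top] at heq
  obtain hV | hV := finite_or_infinite V
  · have := Finite.one_lt_card (α := V)
    omega
  · rw [Nat.card_eq_zero_of_infinite] at heq
    omega

theorem stmt15 {V W : Type*} [Fintype V] [Fintype W] [Nontrivial V] [Nontrivial W]
    (G : SimpleGraph V) (H : SimpleGraph W)
    (hGc : G.Connected) (hHc : H.Connected) (hH : H ≠ ⊤)
    (heq : tollNumber (lexProd G H) = 3 * tollNumber G) :
    G ≠ ⊤ :=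
  stmt15_general G H hH heq
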